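/- arXiv:1004.3848 — 2 statements merged into one kernel-verified Lean document; each statement's English description precedes it below -/
import Mathlib

section
/- Under the random matrix model with separable variance profile, for every integer p ≥ 1 there exists a nice constant K_p such that for every n, every deterministic u ∈ ℂ^N and every z ∈ ℂ∖ℝ₊: E( Σ_{j=1}^n E_{j−1}( u* Q_n(z) a_j a_j* Q_n(z)* u ) )^p ≤ K_p · ‖u‖^{2p} / δ_z^{2p}. -/
open MeasureTheory ProbabilityTheory Matrix Complex

noncomputable section

/-- The closed nonnegative real half-axis `ℝ₊` viewed inside `ℂ`. -/
def nonnegReal : Set ℂ := {w : ℂ | ∃ x : ℝ, 0 ≤ x ∧ w = (x : ℂ)}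

/-- `δ_z`, the distance from `z` to `ℝ₊`. -/
def deltaz (z : ℂ) : ℝ := Metric.infDist z nonnegReal

/-- Euclidean norm of a complex vector. -/
def vecNorm {N : ℕ} (u : Fin N → ℂ) : ℝ := Real.sqrt (∑ i, ‖u i‖ ^ 2)

/-- Spectral (ℓ²-operator) norm of a rectangular complex matrix. -/
def specNorm {m n : ℕ} (M : Matrix (Fin m) (Fin n) ℂ) : ℝ :=
  ‖LinearMap.toContinuousLinearMap (Matrix.toEuclideanLin M)‖

/-- The sesquilinear form `u* M v`. -/
def bform {N : ℕ} (u : Fin N → ℂ) (M : Matrix (Fin N) (Fin N) ℂ) (v : Fin N → ℂ) : ℂ :=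
  star u ⬝ᵥ (M *ᵥ v)

/-- `Y = n^{-1/2} D^{1/2} X D̃^{1/2}` (entrywise). -/
def Ymat {N n : ℕ} (d : Fin N → ℝ) (dt : Fin n → ℝ) (X : Matrix (Fin N) (Fin n) ℂ) :
    Matrix (Fin N) (Fin n) ℂ :=
  Matrix.of fun i j =>
    ((Real.sqrt (d i) * Real.sqrt (dt j) / Real.sqrt (n : ℝ) : ℝ) : ℂ) * X i j

/-- The resolvent `Q(z) = (S S* − z I)⁻¹`. -/
def Qmat {N n : ℕ} (S : Matrix (Fin N) (Fin n) ℂ) (z : ℂ) : Matrix (Fin N) (Fin N) ℂ :=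
  (S * Sᴴ - z • (1 : Matrix (Fin N) (Fin N) ℂ))⁻¹

/-- The co-resolvent `Q̃(z) = (S* S − z I)⁻¹`. -/
def Qtmat {N n : ℕ} (S : Matrix (Fin N) (Fin n) ℂ) (z : ℂ) : Matrix (Fin n) (Fin n) ℂ :=
  (Sᴴ * S - z • (1 : Matrix (Fin n) (Fin n) ℂ))⁻¹

/-- The resolvent with column `j` deleted, `Q_j(z) = (S S* − η_j η_j* − z I)⁻¹`,
using `Σ_j Σ_j* = Σ Σ* − η_j η_j*`. -/
def Qjmat {N n : ℕ} (S : Matrix (Fin N) (Fin n) ℂ) (j : Fin n) (z : ℂ) :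
    Matrix (Fin N) (Fin N) ℂ :=
  (S * Sᴴ - Matrix.vecMulVec (fun i => S i j) (fun i => starRingEnd ℂ (S i j)) -
    z • (1 : Matrix (Fin N) (Fin N) ℂ))⁻¹

/-- `f` is, on `ℂ ∖ ℝ₊`, the Stieltjes transform of a finite nonnegative measure
supported in `ℝ₊`. -/
def IsStieltjesNonneg (f : ℂ → ℂ) : Prop :=
  ∃ μ : Measure ℝ, IsFiniteMeasure μ ∧ μ {t : ℝ | t < 0} = 0 ∧
    ∀ z : ℂ, z ∉ nonnegReal → f z = ∫ t : ℝ, ((t : ℂ) - z)⁻¹ ∂μ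

/-- The deterministic-equivalent matrix `T(z)` built from a pair `(δ, δ̃)`. -/
def Tmat {N n : ℕ} (d : Fin N → ℝ) (dt : Fin n → ℝ) (A : Matrix (Fin N) (Fin n) ℂ)
    (δ δt : ℂ) (z : ℂ) : Matrix (Fin N) (Fin N) ℂ :=
  (-(z • ((1 : Matrix (Fin N) (Fin N) ℂ) + δt • Matrix.diagonal fun i => (d i : ℂ))) +
      A * ((1 : Matrix (Fin n) (Fin n) ℂ) + δ • Matrix.diagonal fun j => (dt j : ℂ))⁻¹ * Aᴴ)⁻¹

/-- The co- deterministic-equivalent matrix `T̃(z)`. -/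
def Ttmat {N n : ℕ} (d : Fin N → ℝ) (dt : Fin n → ℝ) (A : Matrix (Fin N) (Fin n) ℂ)
    (δ δt : ℂ) (z : ℂ) : Matrix (Fin n) (Fin n) ℂ :=
  (-(z • ((1 : Matrix (Fin n) (Fin n) ℂ) + δ • Matrix.diagonal fun j => (dt j : ℂ))) +
      Aᴴ * ((1 : Matrix (Fin N) (Fin N) ℂ) + δt • Matrix.diagonal fun i => (d i : ℂ))⁻¹ * A)⁻¹

/-- Entrywise expectation of the resolvent. -/
def EQmat {Ω : Type} [MeasurableSpace Ω] (P : Measure Ω) {N n : ℕ}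
    (S : Ω → Matrix (Fin N) (Fin n) ℂ) (z : ℂ) : Matrix (Fin N) (Fin N) ℂ :=
  Matrix.of fun i k => ∫ ω, Qmat (S ω) z i k ∂P

/-- Entrywise expectation of the co-resolvent. -/
def EQtmat {Ω : Type} [MeasurableSpace Ω] (P : Measure Ω) {N n : ℕ}
    (S : Ω → Matrix (Fin N) (Fin n) ℂ) (z : ℂ) : Matrix (Fin n) (Fin n) ℂ :=
  Matrix.of fun j k => ∫ ω, Qtmat (S ω) z j k ∂P

/-- `α_n(z) = n⁻¹ Tr D 𝔼Q(z)`. -/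
def alphaE {Ω : Type} [MeasurableSpace Ω] (P : Measure Ω) {N n : ℕ}
    (d : Fin N → ℝ) (S : Ω → Matrix (Fin N) (Fin n) ℂ) (z : ℂ) : ℂ :=
  (n : ℂ)⁻¹ * Matrix.trace (Matrix.diagonal (fun i => (d i : ℂ)) * EQmat P S z)

/-- `α̃_n(z) = n⁻¹ Tr D̃ 𝔼Q̃(z)`. -/
def alphatE {Ω : Type} [MeasurableSpace Ω] (P : Measure Ω) {N n : ℕ}
    (dt : Fin n → ℝ) (S : Ω → Matrix (Fin N) (Fin n) ℂ) (z : ℂ) : ℂ :=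
  (n : ℂ)⁻¹ * Matrix.trace (Matrix.diagonal (fun j => (dt j : ℂ)) * EQtmat P S z)

/-- The intermediate deterministic matrix `R(z)`. -/
def Rmat {Ω : Type} [MeasurableSpace Ω] (P : Measure Ω) {N n : ℕ}
    (d : Fin N → ℝ) (dt : Fin n → ℝ) (A : Matrix (Fin N) (Fin n) ℂ)
    (S : Ω → Matrix (Fin N) (Fin n) ℂ) (z : ℂ) : Matrix (Fin N) (Fin N) ℂ :=
  Tmat d dt A (alphaE P d S z) (alphatE P dt S z) z

/-- The intermediate deterministic matrix `R̃(z)`. -/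
def Rtmat {Ω : Type} [MeasurableSpace Ω] (P : Measure Ω) {N n : ℕ}
    (d : Fin N → ℝ) (dt : Fin n → ℝ) (A : Matrix (Fin N) (Fin n) ℂ)
    (S : Ω → Matrix (Fin N) (Fin n) ℂ) (z : ℂ) : Matrix (Fin n) (Fin n) ℂ :=
  Ttmat d dt A (alphaE P d S z) (alphatE P dt S z) z

/-- The σ-field generated by the first `k` columns `y_0, …, y_{k-1}` of `Y`. -/
def colSigma {Ω : Type} [MeasurableSpace Ω] {N n : ℕ}
    (Y : Ω → Matrix (Fin N) (Fin n) ℂ) (k : ℕ) : MeasurableSpace Ω :=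
  ⨆ ℓ : Fin n, ⨆ _ : (ℓ : ℕ) < k, MeasurableSpace.comap (fun ω => fun i => Y ω i ℓ) inferInstance

/-- The σ-field generated by the columns `(y_ℓ, ℓ ≠ j)` of `Y`. -/
def colSigmaNe {Ω : Type} [MeasurableSpace Ω] {N n : ℕ}
    (Y : Ω → Matrix (Fin N) (Fin n) ℂ) (j : Fin n) : MeasurableSpace Ω :=
  ⨆ ℓ : Fin n, ⨆ _ : ℓ ≠ j, MeasurableSpace.comap (fun ω => fun i => Y ω i ℓ) inferInstance

section AuxDet

open Matrix

variable {Nn n : ℕ}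

lemma vecNorm_nonneg (u : Fin Nn → ℂ) : 0 ≤ vecNorm u := Real.sqrt_nonneg _

lemma vecNorm_eq_norm (u : Fin Nn → ℂ) :
    vecNorm u = ‖(WithLp.equiv 2 (Fin Nn → ℂ)).symm u‖ := by
  rw [EuclideanSpace.norm_eq]; rfl

lemma vecNorm_eq_zero {u : Fin Nn → ℂ} (h : vecNorm u = 0) : u = 0 := by
  rw [vecNorm_eq_norm] at h
  have := norm_eq_zero.mp h
  simpa using congrArg (WithLp.equiv 2 (Fin Nn → ℂ)) this

lemma cauchy_schwarz_dot (a b : Fin Nn → ℂ) :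
    ‖star a ⬝ᵥ b‖ ≤ vecNorm a * vecNorm b := by
  rw [vecNorm_eq_norm, vecNorm_eq_norm]
  have h := norm_inner_le_norm (𝕜 := ℂ) ((WithLp.equiv 2 (Fin Nn → ℂ)).symm a)
    ((WithLp.equiv 2 (Fin Nn → ℂ)).symm b)
  rwa [show inner ℂ ((WithLp.equiv 2 (Fin Nn → ℂ)).symm a) ((WithLp.equiv 2 (Fin Nn → ℂ)).symm b)
    = star a ⬝ᵥ b from dotProduct_comm _ _] at h

lemma dot_self_eq (a : Fin Nn → ℂ) : star a ⬝ᵥ a = ((vecNorm a ^ 2 : ℝ) : ℂ) := by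
  have h : vecNorm a ^ 2 = ∑ i, ‖a i‖ ^ 2 :=
    Real.sq_sqrt (Finset.sum_nonneg fun i _ => by positivity)
  rw [h]
  push_cast
  unfold dotProduct
  refine Finset.sum_congr rfl fun i _ => ?_
  simp only [Pi.star_apply, RCLike.star_def]
  rw [mul_comm, Complex.mul_conj]
  norm_cast
  rw [Complex.normSq_eq_norm_sq]

lemma mulVec_vecNorm_le {m k : ℕ} (M : Matrix (Fin m) (Fin k) ℂ) (v : Fin k → ℂ) :
    vecNorm (M *ᵥ v) ≤ specNorm M * vecNorm v := by
  rw [vecNorm_eq_norm, vecNorm_eq_norm]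
  exact (LinearMap.toContinuousLinearMap (Matrix.toEuclideanLin M)).le_opNorm
    ((WithLp.equiv 2 (Fin k → ℂ)).symm v)

lemma specNorm_nonneg {m k : ℕ} (M : Matrix (Fin m) (Fin k) ℂ) : 0 ≤ specNorm M :=
  norm_nonneg _

/-- `‖Aᴴ *ᵥ w‖ ≤ specNorm A * ‖w‖`. -/
lemma conjTranspose_mulVec_le {m k : ℕ} (M : Matrix (Fin m) (Fin k) ℂ) (w : Fin m → ℂ) :
    vecNorm (Mᴴ *ᵥ w) ≤ specNorm M * vecNorm w := by
  set y := Mᴴ *ᵥ w with hy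
  have key : (vecNorm y) ^ 2 ≤ vecNorm w * (specNorm M * vecNorm y) := by
    have h1 : star y ⬝ᵥ y = star w ⬝ᵥ (M *ᵥ y) := by
      rw [hy, Matrix.star_mulVec, Matrix.conjTranspose_conjTranspose,
        ← Matrix.dotProduct_mulVec]
    have h2 : ‖star y ⬝ᵥ y‖ = vecNorm y ^ 2 := by
      rw [dot_self_eq]
      rw [Complex.norm_real]
      exact _root_.abs_of_nonneg (pow_nonneg (vecNorm_nonneg _) 2)
    calc (vecNorm y) ^ 2 = ‖star w ⬝ᵥ (M *ᵥ y)‖ := by rw [← h2, h1]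
      _ ≤ vecNorm w * vecNorm (M *ᵥ y) := cauchy_schwarz_dot _ _
      _ ≤ vecNorm w * (specNorm M * vecNorm y) := by
          exact mul_le_mul_of_nonneg_left (mulVec_vecNorm_le M y) (vecNorm_nonneg w)
  rcases eq_or_lt_of_le (vecNorm_nonneg y) with h0 | h0
  · rw [← h0]; exact mul_nonneg (specNorm_nonneg M) (vecNorm_nonneg w)
  · nlinarith [key]

lemma nonnegReal_isClosed : IsClosed nonnegReal := by
  have : nonnegReal = Complex.re ⁻¹' (Set.Ici 0) ∩ Complex.im ⁻¹' {0} := by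
    ext w
    constructor
    · rintro ⟨x, hx, rfl⟩
      simp [hx]
    · rintro ⟨h1, h2⟩
      exact ⟨w.re, h1, (Complex.ext (by simp) (by simpa using h2.symm)).symm⟩
  rw [this]
  exact (isClosed_Ici.preimage Complex.continuous_re).inter
    (isClosed_singleton.preimage Complex.continuous_im)

lemma nonnegReal_nonempty : nonnegReal.Nonempty := ⟨0, 0, le_refl _, by simp⟩

lemma deltaz_pos {z : ℂ} (hz : z ∉ nonnegReal) : 0 < deltaz z :=
  (nonnegReal_isClosed.notMem_iff_infDist_pos nonnegReal_nonempty).mp hz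

lemma conj_not_mem {z : ℂ} (hz : z ∉ nonnegReal) : (starRingEnd ℂ) z ∉ nonnegReal := by
  rintro ⟨x, hx, hxe⟩
  exact hz ⟨x, hx, by simpa using congrArg (starRingEnd ℂ) hxe⟩

lemma dist_conj_real (z : ℂ) {w : ℂ} (hw : w ∈ nonnegReal) :
    dist ((starRingEnd ℂ) z) w = dist z w := by
  obtain ⟨x, _, rfl⟩ := hw
  rw [dist_eq_norm, dist_eq_norm]
  have : (starRingEnd ℂ) z - (x : ℂ) = (starRingEnd ℂ) (z - x) := by
    rw [map_sub, Complex.conj_ofReal]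
  rw [this, RCLike.norm_conj]

lemma deltaz_le_conj (z : ℂ) : deltaz z ≤ deltaz ((starRingEnd ℂ) z) := by
  by_contra h
  push_neg at h
  obtain ⟨w, hw, hlt⟩ := (Metric.infDist_lt_iff nonnegReal_nonempty).mp h
  rw [dist_conj_real z hw] at hlt
  exact absurd (Metric.infDist_le_dist_of_mem hw) (not_le.mpr hlt)

lemma deltaz_conj (z : ℂ) : deltaz ((starRingEnd ℂ) z) = deltaz z := by
  refine le_antisymm ?_ (deltaz_le_conj z)
  have := deltaz_le_conj ((starRingEnd ℂ) z)
  simpa using this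

/-- lower bound: `δ_z ‖w‖ ≤ ‖(S Sᴴ − z) w‖`. -/
lemma resolvent_lower {Nn n : ℕ} (S : Matrix (Fin Nn) (Fin n) ℂ) {z : ℂ}
    (hz : z ∉ nonnegReal) (w : Fin Nn → ℂ) :
    deltaz z * vecNorm w ≤ vecNorm ((S * Sᴴ - z • (1 : Matrix (Fin Nn) (Fin Nn) ℂ)) *ᵥ w) := by
  rcases eq_or_ne w 0 with rfl | hw
  · simp [Matrix.mulVec_zero, vecNorm]
  have hwn : 0 < vecNorm w := by
    rcases eq_or_lt_of_le (vecNorm_nonneg w) with h0 | h0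
    · exact absurd (vecNorm_eq_zero h0.symm) hw
    · exact h0
  set M := S * Sᴴ - z • (1 : Matrix (Fin Nn) (Fin Nn) ℂ) with hM
  set y := Sᴴ *ᵥ w with hy
  -- quadratic form identity
  have hq : star w ⬝ᵥ (M *ᵥ w) = ((vecNorm y ^ 2 : ℝ) : ℂ) - z * ((vecNorm w ^ 2 : ℝ) : ℂ) := by
    rw [hM, Matrix.sub_mulVec, dotProduct_sub]
    congr 1
    · rw [← Matrix.mulVec_mulVec, ← dot_self_eq, hy, Matrix.star_mulVec,
        Matrix.conjTranspose_conjTranspose, ← Matrix.dotProduct_mulVec]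
    · rw [Matrix.smul_mulVec, Matrix.one_mulVec, dotProduct_smul,
        ← dot_self_eq]
      simp [smul_eq_mul]
  -- the scalar bound
  have hmem : (((vecNorm y ^ 2) / (vecNorm w ^ 2) : ℝ) : ℂ) ∈ nonnegReal :=
    ⟨_, by positivity, rfl⟩
  have hsc : deltaz z * vecNorm w ^ 2 ≤ ‖star w ⬝ᵥ (M *ᵥ w)‖ := by
    rw [hq]
    have hwne : (vecNorm w ^ 2 : ℝ) ≠ 0 := by positivity
    have : ((vecNorm y ^ 2 : ℝ) : ℂ) - z * ((vecNorm w ^ 2 : ℝ) : ℂ)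
        = ((vecNorm w ^ 2 : ℝ) : ℂ) * ((((vecNorm y ^ 2) / (vecNorm w ^ 2) : ℝ) : ℂ) - z) := by
      have hr : (vecNorm w ^ 2 : ℝ) * (vecNorm y ^ 2 / vecNorm w ^ 2) = vecNorm y ^ 2 := by
        field_simp
      rw [mul_sub, ← Complex.ofReal_mul, hr]
      ring
    rw [this, norm_mul, Complex.norm_real,
      Real.norm_of_nonneg (by positivity : (0:ℝ) ≤ vecNorm w ^ 2)]
    rw [mul_comm (deltaz z)]
    apply mul_le_mul_of_nonneg_left _ (by positivity)
    have h1 : deltaz z ≤ dist z ((((vecNorm y ^ 2) / (vecNorm w ^ 2) : ℝ) : ℂ)) :=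
      Metric.infDist_le_dist_of_mem hmem
    rw [dist_eq_norm] at h1
    calc deltaz z ≤ ‖z - _‖ := h1
      _ = _ := by rw [← norm_neg]; congr 1; ring
  have hcs : ‖star w ⬝ᵥ (M *ᵥ w)‖ ≤ vecNorm w * vecNorm (M *ᵥ w) := cauchy_schwarz_dot _ _
  nlinarith [vecNorm_nonneg (M *ᵥ w), hwn]

lemma resolvent_det_ne {Nn n : ℕ} (S : Matrix (Fin Nn) (Fin n) ℂ) {z : ℂ}
    (hz : z ∉ nonnegReal) :
    (S * Sᴴ - z • (1 : Matrix (Fin Nn) (Fin Nn) ℂ)).det ≠ 0 := by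
  intro hdet
  obtain ⟨v, hv, hv0⟩ := (Matrix.exists_mulVec_eq_zero_iff).mpr hdet
  have h1 := resolvent_lower S hz v
  rw [hv0] at h1
  have h2 : vecNorm (0 : Fin Nn → ℂ) = 0 := by simp [vecNorm]
  rw [h2] at h1
  have hd := deltaz_pos hz
  have h3 : vecNorm v = 0 := by nlinarith [vecNorm_nonneg v]
  exact hv (vecNorm_eq_zero h3)

/-- `‖Q(z) v‖ ≤ ‖v‖ / δ_z`. -/
lemma Qmat_mulVec_le {Nn n : ℕ} (S : Matrix (Fin Nn) (Fin n) ℂ) {z : ℂ}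
    (hz : z ∉ nonnegReal) (v : Fin Nn → ℂ) :
    vecNorm (Qmat S z *ᵥ v) ≤ vecNorm v / deltaz z := by
  have hd := deltaz_pos hz
  set M := S * Sᴴ - z • (1 : Matrix (Fin Nn) (Fin Nn) ℂ) with hM
  have hdet := resolvent_det_ne S hz
  have hMQ : M * Qmat S z = 1 := Matrix.mul_nonsing_inv M (Ne.isUnit hdet)
  have hMv : M *ᵥ (Qmat S z *ᵥ v) = v := by
    rw [Matrix.mulVec_mulVec, hMQ, Matrix.one_mulVec]
  have := resolvent_lower S hz (Qmat S z *ᵥ v)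
  rw [hMv] at this
  rw [le_div_iff₀ hd]
  linarith

lemma Qmat_conjTranspose {Nn n : ℕ} (S : Matrix (Fin Nn) (Fin n) ℂ) (z : ℂ) :
    (Qmat S z)ᴴ = Qmat S ((starRingEnd ℂ) z) := by
  unfold Qmat
  rw [Matrix.conjTranspose_nonsing_inv]
  congr 1
  rw [Matrix.conjTranspose_sub, Matrix.conjTranspose_mul, Matrix.conjTranspose_conjTranspose]
  congr 1
  rw [Matrix.conjTranspose_smul]
  simp [Matrix.conjTranspose_one, RCLike.star_def]

/-- Key deterministic bound: the sum over columns of `A` of `‖u* Q a_j‖²`. -/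
lemma sum_bform_sq_le {Nn n : ℕ} (S A : Matrix (Fin Nn) (Fin n) ℂ) (u : Fin Nn → ℂ)
    {z : ℂ} (hz : z ∉ nonnegReal) :
    ∑ j : Fin n, ‖bform u (Qmat S z) (fun i => A i j)‖ ^ 2 ≤
      specNorm A ^ 2 * vecNorm u ^ 2 / deltaz z ^ 2 := by
  have hd := deltaz_pos hz
  set w := (Qmat S z)ᴴ *ᵥ u with hw
  set r := Aᴴ *ᵥ w with hr
  have hterm : ∀ j : Fin n, bform u (Qmat S z) (fun i => A i j) = (starRingEnd ℂ) (r j) := by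
    intro j
    unfold bform
    rw [hr, hw]
    simp only [Matrix.mulVec, dotProduct, Matrix.conjTranspose_apply,
      Pi.star_apply, RCLike.star_def, map_sum, _root_.map_mul, Complex.conj_conj,
      Finset.mul_sum]
    rw [Finset.sum_comm]
    refine Finset.sum_congr rfl fun k _ => Finset.sum_congr rfl fun i _ => ?_
    ring
  have hsum : ∑ j : Fin n, ‖bform u (Qmat S z) (fun i => A i j)‖ ^ 2 = vecNorm r ^ 2 := by
    rw [show (vecNorm r) ^ 2 = ∑ j, ‖r j‖ ^ 2 from
      Real.sq_sqrt (Finset.sum_nonneg fun i _ => by positivity)]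
    refine Finset.sum_congr rfl fun j _ => ?_
    rw [hterm j, RCLike.norm_conj]
  rw [hsum]
  have h1 : vecNorm r ≤ specNorm A * vecNorm w := conjTranspose_mulVec_le A w
  have h2 : vecNorm w ≤ vecNorm u / deltaz z := by
    rw [hw, Qmat_conjTranspose]
    have := Qmat_mulVec_le S (conj_not_mem hz) u
    rwa [deltaz_conj] at this
  have h3 : vecNorm r ≤ specNorm A * (vecNorm u / deltaz z) :=
    h1.trans (mul_le_mul_of_nonneg_left h2 (specNorm_nonneg A))
  have h4 : 0 ≤ vecNorm r := vecNorm_nonneg r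
  have h5 : (specNorm A * (vecNorm u / deltaz z)) ^ 2
      = specNorm A ^ 2 * vecNorm u ^ 2 / deltaz z ^ 2 := by
    field_simp
  have h6 : vecNorm r ^ 2 ≤ (specNorm A * (vecNorm u / deltaz z)) ^ 2 := by nlinarith
  linarith [h5 ▸ h6]
end AuxDet

section AuxMeas

open Matrix

variable {Ω : Type} [MeasurableSpace Ω]

lemma measurable_det_of_entries {k : ℕ} {M : Ω → Matrix (Fin k) (Fin k) ℂ}
    (h : ∀ i j, Measurable fun ω => M ω i j) :
    Measurable fun ω => (M ω).det := by
  simp_rw [Matrix.det_apply']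
  refine Finset.measurable_sum _ fun σ _ => ?_
  exact (Finset.measurable_prod _ fun i _ => h (σ i) i).const_mul _

lemma measurable_adjugate_of_entries {k : ℕ} {M : Ω → Matrix (Fin k) (Fin k) ℂ}
    (h : ∀ i j, Measurable fun ω => M ω i j) (i j : Fin k) :
    Measurable fun ω => (M ω).adjugate i j := by
  simp_rw [Matrix.adjugate_apply]
  refine measurable_det_of_entries fun i' j' => ?_
  simp_rw [Matrix.updateRow_apply]
  by_cases hij : i' = j
  · simp [hij]
  · simp only [hij, if_false]
    exact h i' j'

lemma measurable_inv_of_entries {k : ℕ} {M : Ω → Matrix (Fin k) (Fin k) ℂ}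
    (h : ∀ i j, Measurable fun ω => M ω i j) (i j : Fin k) :
    Measurable fun ω => (M ω)⁻¹ i j := by
  simp_rw [Matrix.inv_def, Matrix.smul_apply, Ring.inverse_eq_inv', smul_eq_mul]
  exact ((measurable_det_of_entries h).inv).mul (measurable_adjugate_of_entries h i j)

lemma measurable_Qmat_entries {Nn n : ℕ} {S : Ω → Matrix (Fin Nn) (Fin n) ℂ}
    (h : ∀ i j, Measurable fun ω => S ω i j) (z : ℂ) (i j : Fin Nn) :
    Measurable fun ω => Qmat (S ω) z i j := by
  refine measurable_inv_of_entries (fun i' j' => ?_) i j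
  simp only [Matrix.sub_apply, Matrix.mul_apply, Matrix.smul_apply, Matrix.conjTranspose_apply,
    Matrix.one_apply, smul_eq_mul]
  refine Measurable.sub ?_ measurable_const
  refine Finset.measurable_sum _ fun k _ => ?_
  exact (h i' k).mul ((Complex.continuous_conj.measurable).comp (h j' k))

lemma measurable_bform {Nn n : ℕ} {S : Ω → Matrix (Fin Nn) (Fin n) ℂ}
    (h : ∀ i j, Measurable fun ω => S ω i j) (u : Fin Nn → ℂ) (a : Fin Nn → ℂ) (z : ℂ) :
    Measurable fun ω => ‖bform u (Qmat (S ω) z) a‖ ^ 2 := by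
  have hb : Measurable fun ω => bform u (Qmat (S ω) z) a := by
    unfold bform dotProduct Matrix.mulVec
    refine Finset.measurable_sum _ fun i _ => ?_
    refine Measurable.const_mul ?_ _
    refine Finset.measurable_sum _ fun k _ => ?_
    exact (measurable_Qmat_entries h z i k).mul measurable_const
  exact (hb.norm).pow measurable_const

end AuxMeas

section AuxGarsia

open MeasureTheory

variable {Ω : Type} [MeasurableSpace Ω]

lemma pow_succ_sub_le (x y : ℝ) (hy : 0 ≤ y) (hxy : y ≤ x) (q : ℕ) :
    x ^ (q + 1) - y ^ (q + 1) ≤ (q + 1 : ℝ) * x ^ q * (x - y) := by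
  induction q with
  | zero => simp
  | succ q ih =>
    have hx : 0 ≤ x := hy.trans hxy
    have h1 : y ^ (q + 1) ≤ x ^ (q + 1) := pow_le_pow_left₀ hy hxy _
    have h3 := mul_le_mul_of_nonneg_left ih hx
    have h4 : (x - y) * y ^ (q + 1) ≤ (x - y) * x ^ (q + 1) :=
      mul_le_mul_of_nonneg_left h1 (sub_nonneg.mpr hxy)
    have e1 : x ^ (q + 1 + 1) = x * x ^ (q + 1) := by ring
    have e2 : y ^ (q + 1 + 1) = y * y ^ (q + 1) := by ring
    have e3 : x * ((q + 1 : ℝ) * x ^ q * (x - y)) = (q + 1 : ℝ) * x ^ (q + 1) * (x - y) := by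
      ring
    push_cast
    nlinarith [pow_nonneg hx q, pow_nonneg hx (q + 1)]

lemma integrable_of_ae_bound' {P : Measure Ω} [IsProbabilityMeasure P] {g : Ω → ℝ} (c : ℝ)
    (hg : AEStronglyMeasurable g P) (h : ∀ᵐ ω ∂P, |g ω| ≤ c) : Integrable g P :=
  (integrable_const c).mono' hg (by simpa [Real.norm_eq_abs] using h)

/-- Garsia-type maximal bound for sums of conditional expectations. -/
lemma garsia {n : ℕ} (P : Measure Ω) [IsProbabilityMeasure P]
    (F : ℕ → MeasurableSpace Ω) (hF : ∀ k, F k ≤ (inferInstance : MeasurableSpace Ω))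
    (hmono : Monotone F)
    (f : Fin n → Ω → ℝ) (hfm : ∀ j, Measurable (f j))
    (hf0 : ∀ j ω, 0 ≤ f j ω) {C : ℝ} (hC : 0 ≤ C)
    (hsum : ∀ ω, ∑ j, f j ω ≤ C) (q : ℕ) :
    ∫ ω, (∑ j : Fin n, (P[f j | F (j : ℕ)]) ω) ^ q ∂P ≤ q.factorial * C ^ q := by
  -- pointwise bound on each f j
  have hfb : ∀ j ω, f j ω ≤ C := by
    intro j ω
    calc f j ω ≤ ∑ i, f i ω :=
      Finset.single_le_sum (fun i _ => hf0 i ω) (Finset.mem_univ j)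
    _ ≤ C := hsum ω
  have hfint : ∀ j, Integrable (f j) P := fun j =>
    integrable_of_ae_bound' C (hfm j).aestronglyMeasurable
      (Filter.Eventually.of_forall fun ω => abs_le.mpr ⟨by linarith [hf0 j ω], hfb j ω⟩)
  set g : Fin n → Ω → ℝ := fun j => P[f j | F (j : ℕ)] with hg
  have hgSM : ∀ j : Fin n, StronglyMeasurable[F (j : ℕ)] (g j) := fun j =>
    stronglyMeasurable_condExp
  have hgm : ∀ j, Measurable (g j) := fun j => ((hgSM j).mono (hF j)).measurable
  have hg0 : ∀ j : Fin n, 0 ≤ᵐ[P] g j := fun j =>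
    condExp_nonneg (Filter.Eventually.of_forall fun ω => hf0 j ω)
  have hgC : ∀ j : Fin n, g j ≤ᵐ[P] fun _ => C := by
    intro j
    have h1 : g j ≤ᵐ[P] P[fun _ => C | F (j : ℕ)] :=
      condExp_mono (hfint j) (integrable_const C)
        (Filter.Eventually.of_forall fun ω => hfb j ω)
    have h2 : P[fun _ : Ω => C | F (j : ℕ)] = fun _ => C := condExp_const (hF j) C
    rw [h2] at h1
    exact h1
  -- the good event
  have hE : ∀ᵐ ω ∂P, ∀ j : Fin n, 0 ≤ g j ω ∧ g j ω ≤ C := by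
    rw [MeasureTheory.ae_all_iff]
    intro j
    filter_upwards [hg0 j, hgC j] with ω h1 h2 using ⟨h1, h2⟩
  -- partial sums
  set S : Ω → ℝ := fun ω => ∑ j : Fin n, g j ω with hS
  set Apart : ℕ → Ω → ℝ := fun k ω => ∑ j : Fin n, if (j : ℕ) < k then g j ω else 0 with hA
  have hAm : ∀ k, Measurable (Apart k) := by
    intro k
    apply Finset.measurable_sum
    intro j _
    by_cases hk : (j : ℕ) < k
    · simpa [hk] using hgm j
    · simpa [hk] using measurable_const
  have hSm : Measurable S := Finset.measurable_sum _ fun j _ => hgm j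
  -- a.e. bounds for S, Apart
  have hbounds : ∀ᵐ ω ∂P, (∀ k, 0 ≤ Apart k ω ∧ Apart k ω ≤ S ω) ∧ 0 ≤ S ω ∧ S ω ≤ n * C := by
    filter_upwards [hE] with ω hω
    refine ⟨fun k => ⟨?_, ?_⟩, ?_, ?_⟩
    · exact Finset.sum_nonneg fun j _ => by
        by_cases hk : (j : ℕ) < k
        · simpa [hk] using (hω j).1
        · simp [hk]
    · apply Finset.sum_le_sum
      intro j _
      by_cases hk : (j : ℕ) < k
      · simp [hk]
      · simpa [hk] using (hω j).1
    · exact Finset.sum_nonneg fun j _ => (hω j).1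
    · calc S ω ≤ ∑ _j : Fin n, C := Finset.sum_le_sum fun j _ => (hω j).2
        _ = n * C := by simp [mul_comm]
  -- main induction
  induction q with
  | zero => simp
  | succ q ih =>
    -- integrability of the powers
    have hSq_int : ∀ r : ℕ, Integrable (fun ω => S ω ^ r) P := by
      intro r
      refine integrable_of_ae_bound' ((n * C) ^ r) ((hSm.pow measurable_const).aestronglyMeasurable) ?_
      filter_upwards [hbounds] with ω ⟨_, h0, h1⟩
      rw [_root_.abs_of_nonneg (pow_nonneg h0 r)]
      exact pow_le_pow_left₀ h0 h1 r
    have hfsel_nonneg : ∀ k ω, 0 ≤ ∑ j : Fin n, if (j : ℕ) = k then f j ω else 0 := by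
      intro k ω
      refine Finset.sum_nonneg fun j _ => ?_
      by_cases hj : (j : ℕ) = k
      · simpa [hj] using hf0 j ω
      · simp [hj]
    have hfsel_le : ∀ k ω, (∑ j : Fin n, if (j : ℕ) = k then f j ω else 0) ≤ C := by
      intro k ω
      calc (∑ j : Fin n, if (j : ℕ) = k then f j ω else 0) ≤ ∑ j : Fin n, f j ω := by
            refine Finset.sum_le_sum fun j _ => ?_
            by_cases hj : (j : ℕ) = k
            · simp [hj]
            · simpa [hj] using hf0 j ω
        _ ≤ C := hsum ω
    have hfselm : ∀ k, Measurable fun ω => ∑ j : Fin n, if (j : ℕ) = k then f j ω else 0 := by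
      intro k
      refine Finset.measurable_sum _ fun j _ => ?_
      by_cases hj : (j : ℕ) = k
      · simpa [hj] using hfm j
      · simp [hj]
    have hA_int : ∀ k r : ℕ, Integrable (fun ω => Apart k ω ^ r) P := by
      intro k r
      refine integrable_of_ae_bound' (((n : ℝ) * C) ^ r)
        ((hAm k).pow measurable_const).aestronglyMeasurable ?_
      filter_upwards [hbounds] with ω ⟨hAb, h0, h1⟩
      rw [_root_.abs_of_nonneg (pow_nonneg (hAb k).1 r)]
      exact pow_le_pow_left₀ (hAb k).1 ((hAb k).2.trans h1) r
    -- exact pointwise increment identity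
    have hdiff_eq : ∀ (k : ℕ) (hk : k < n) (ω : Ω),
        Apart (k + 1) ω - Apart k ω = g ⟨k, hk⟩ ω := by
      intro k hk ω
      show (∑ j : Fin n, if (j : ℕ) < k + 1 then g j ω else 0)
          - (∑ j : Fin n, if (j : ℕ) < k then g j ω else 0) = g ⟨k, hk⟩ ω
      rw [← Finset.sum_sub_distrib]
      have hterm : ∀ j : Fin n,
          (if (j : ℕ) < k + 1 then g j ω else 0) - (if (j : ℕ) < k then g j ω else 0)
          = if j = ⟨k, hk⟩ then g j ω else 0 := by
        intro j
        rcases lt_trichotomy (j : ℕ) k with h | h | h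
        · have h2 : (j : ℕ) < k + 1 := Nat.lt_succ_of_lt h
          have h3 : j ≠ ⟨k, hk⟩ := by simp [Fin.ext_iff]; omega
          simp [h, h2, h3]
        · have h2 : (j : ℕ) < k + 1 := by omega
          have h3 : j = ⟨k, hk⟩ := by simp [Fin.ext_iff]; omega
          have h4 : ¬ ((j : ℕ) < k) := by omega
          simp [h2, h3, h4]
        · have h2 : ¬ ((j : ℕ) < k + 1) := by omega
          have h3 : j ≠ ⟨k, hk⟩ := by simp [Fin.ext_iff]; omega
          have h4 : ¬ ((j : ℕ) < k) := by omega
          simp [h2, h3, h4]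
      simp_rw [hterm]
      simp
    -- pointwise telescoping of S ^ (q+1)
    have htel : ∀ ω, S ω ^ (q + 1)
        = ∑ k ∈ Finset.range n, (Apart (k + 1) ω ^ (q + 1) - Apart k ω ^ (q + 1)) := by
      intro ω
      rw [Finset.sum_range_sub (fun k => Apart k ω ^ (q + 1))]
      have h1 : Apart n ω = S ω := by
        refine Finset.sum_congr rfl fun j _ => ?_
        simp [j.isLt]
      have h0 : Apart 0 ω = 0 := by
        refine Finset.sum_eq_zero fun j _ => by simp
      rw [h1, h0]
      simp
    -- the key per-step estimate
    have hkey : ∀ k ∈ Finset.range n,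
        ∫ ω, (Apart (k + 1) ω ^ (q + 1) - Apart k ω ^ (q + 1)) ∂P ≤
        (q + 1 : ℝ) * ∫ ω, Apart (k + 1) ω ^ q *
          (∑ j : Fin n, if (j : ℕ) = k then f j ω else 0) ∂P := by
      intro k hkr
      have hk : k < n := Finset.mem_range.mp hkr
      have hfsel_eq : ∀ ω, (∑ j : Fin n, if (j : ℕ) = k then f j ω else 0) = f ⟨k, hk⟩ ω := by
        intro ω
        have hiff : ∀ j : Fin n, ((j : ℕ) = k) = (j = ⟨k, hk⟩) := by
          intro j
          simp [Fin.ext_iff]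
        simp_rw [hiff]
        simp
      -- a.e. pointwise bound
      have hmonoA : ∀ᵐ ω ∂P, Apart k ω ≤ Apart (k + 1) ω := by
        filter_upwards [hE] with ω hEω
        refine Finset.sum_le_sum fun j _ => ?_
        by_cases hj : (j : ℕ) < k
        · have : (j : ℕ) < k + 1 := Nat.lt_succ_of_lt hj
          simp [hj, this]
        · by_cases hj2 : (j : ℕ) < k + 1
          · simpa [hj, hj2] using (hEω j).1
          · simp [hj, hj2]
      have hae : ∀ᵐ ω ∂P, Apart (k + 1) ω ^ (q + 1) - Apart k ω ^ (q + 1) ≤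
          (q + 1 : ℝ) * (Apart (k + 1) ω ^ q * g ⟨k, hk⟩ ω) := by
        filter_upwards [hbounds, hmonoA] with ω hb h1
        obtain ⟨hAb, h0S, hSC⟩ := hb
        have h2 := pow_succ_sub_le (Apart (k + 1) ω) (Apart k ω) (hAb k).1 h1 q
        have h3 : Apart (k + 1) ω - Apart k ω = g ⟨k, hk⟩ ω := hdiff_eq k hk ω
        rw [h3] at h2
        linarith [h2, mul_assoc (q + 1 : ℝ) (Apart (k + 1) ω ^ q) (g ⟨k, hk⟩ ω)]
      have hint1 : Integrable (fun ω => Apart (k + 1) ω ^ (q + 1) - Apart k ω ^ (q + 1)) P :=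
        (hA_int (k + 1) (q + 1)).sub (hA_int k (q + 1))
      have hgk_int : Integrable (g ⟨k, hk⟩) P := integrable_condExp
      have hAgq_int : Integrable (fun ω => Apart (k + 1) ω ^ q * g ⟨k, hk⟩ ω) P := by
        refine integrable_of_ae_bound' (((n : ℝ) * C) ^ q * C)
          (((hAm (k + 1)).pow measurable_const).mul (hgm _)).aestronglyMeasurable ?_
        filter_upwards [hbounds, hE] with ω ⟨hAb, h0, h1⟩ hEω
        rw [abs_mul, _root_.abs_of_nonneg (pow_nonneg (hAb (k + 1)).1 q),
          _root_.abs_of_nonneg (hEω ⟨k, hk⟩).1]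
        exact mul_le_mul (pow_le_pow_left₀ (hAb (k + 1)).1 ((hAb (k + 1)).2.trans h1) q)
          (hEω ⟨k, hk⟩).2 (hEω ⟨k, hk⟩).1 (by positivity)
      have hint2 : Integrable (fun ω => (q + 1 : ℝ) * (Apart (k + 1) ω ^ q * g ⟨k, hk⟩ ω)) P :=
        hAgq_int.const_mul _
      have step1 := integral_mono_ae hint1 hint2 hae
      -- pull-out property
      have hASM : StronglyMeasurable[F k] (Apart (k + 1)) := by
        refine Finset.stronglyMeasurable_fun_sum _ fun j _ => ?_
        by_cases hjk : (j : ℕ) < k + 1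
        · simp only [hjk, if_true]
          exact (hgSM j).mono (hmono (Nat.lt_succ_iff.mp hjk))
        · simp only [hjk, if_false]
          exact stronglyMeasurable_const
      have hASMq : StronglyMeasurable[F k] (fun ω => Apart (k + 1) ω ^ q) := hASM.pow q
      have hmul_int : Integrable ((fun ω => Apart (k + 1) ω ^ q) * f ⟨k, hk⟩) P := by
        refine integrable_of_ae_bound' (((n : ℝ) * C) ^ q * C)
          (((hAm (k + 1)).pow measurable_const).mul (hfm _)).aestronglyMeasurable ?_
        filter_upwards [hbounds] with ω ⟨hAb, h0, h1⟩
        show |Apart (k + 1) ω ^ q * f ⟨k, hk⟩ ω| ≤ _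
        rw [abs_mul, _root_.abs_of_nonneg (pow_nonneg (hAb (k + 1)).1 q),
          _root_.abs_of_nonneg (hf0 ⟨k, hk⟩ ω)]
        exact mul_le_mul (pow_le_pow_left₀ (hAb (k + 1)).1 ((hAb (k + 1)).2.trans h1) q)
          (hfb ⟨k, hk⟩ ω) (hf0 ⟨k, hk⟩ ω) (by positivity)
      have hpull := condExp_mul_of_stronglyMeasurable_left (μ := P) (m := F k) hASMq hmul_int
        (hfint ⟨k, hk⟩)
      have e1 : ∫ ω, Apart (k + 1) ω ^ q * g ⟨k, hk⟩ ω ∂P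
          = ∫ ω, Apart (k + 1) ω ^ q * f ⟨k, hk⟩ ω ∂P := by
        have h2 : ((fun ω => Apart (k + 1) ω ^ q) * fun ω => (P[f ⟨k, hk⟩|F k]) ω) =ᵐ[P]
            P[(fun ω => Apart (k + 1) ω ^ q) * f ⟨k, hk⟩|F k] := hpull.symm
        have h3 : ∫ ω, Apart (k + 1) ω ^ q * g ⟨k, hk⟩ ω ∂P
            = ∫ ω, (P[(fun ω => Apart (k + 1) ω ^ q) * f ⟨k, hk⟩|F k]) ω ∂P :=
          integral_congr_ae h2
        rw [h3, integral_condExp (hF k)]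
        rfl
      have e2 : ∫ ω, Apart (k + 1) ω ^ q *
          (∑ j : Fin n, if (j : ℕ) = k then f j ω else 0) ∂P
          = ∫ ω, Apart (k + 1) ω ^ q * f ⟨k, hk⟩ ω ∂P := by
        refine integral_congr_ae (Filter.Eventually.of_forall fun ω => ?_)
        show Apart (k + 1) ω ^ q * _ = Apart (k + 1) ω ^ q * _
        rw [hfsel_eq ω]
      have e3 : ∫ ω, (q + 1 : ℝ) * (Apart (k + 1) ω ^ q * g ⟨k, hk⟩ ω) ∂P
          = (q + 1 : ℝ) * ∫ ω, Apart (k + 1) ω ^ q * g ⟨k, hk⟩ ω ∂P :=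
        integral_const_mul _ _
      rw [e3, e1] at step1
      rw [e2]
      exact step1
    -- sum everything
    have hAfsel_int : ∀ k, Integrable (fun ω => Apart (k + 1) ω ^ q *
        (∑ j : Fin n, if (j : ℕ) = k then f j ω else 0)) P := by
      intro k
      refine integrable_of_ae_bound' (((n : ℝ) * C) ^ q * C)
        (((hAm (k + 1)).pow measurable_const).mul (hfselm k)).aestronglyMeasurable ?_
      filter_upwards [hbounds] with ω ⟨hAb, h0, h1⟩
      rw [abs_mul, _root_.abs_of_nonneg (pow_nonneg (hAb (k + 1)).1 q),
        _root_.abs_of_nonneg (hfsel_nonneg k ω)]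
      exact mul_le_mul (pow_le_pow_left₀ (hAb (k + 1)).1 ((hAb (k + 1)).2.trans h1) q)
        (hfsel_le k ω) (hfsel_nonneg k ω) (by positivity)
    have hstart : ∫ ω, (∑ j : Fin n, (P[f j|F (j : ℕ)]) ω) ^ (q + 1) ∂P
        = ∑ k ∈ Finset.range n, ∫ ω, (Apart (k + 1) ω ^ (q + 1) - Apart k ω ^ (q + 1)) ∂P := by
      have h1 : ∫ ω, (∑ j : Fin n, (P[f j|F (j : ℕ)]) ω) ^ (q + 1) ∂P
          = ∫ ω, ∑ k ∈ Finset.range n, (Apart (k + 1) ω ^ (q + 1) - Apart k ω ^ (q + 1)) ∂P :=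
        integral_congr_ae (Filter.Eventually.of_forall fun ω => htel ω)
      rw [h1, integral_finset_sum (Finset.range n)
        (f := fun k ω => Apart (k + 1) ω ^ (q + 1) - Apart k ω ^ (q + 1))
        (fun k _ => (hA_int (k + 1) (q + 1)).sub (hA_int k (q + 1)))]
    have hmid : ∑ k ∈ Finset.range n, ((q + 1 : ℝ) * ∫ ω, Apart (k + 1) ω ^ q *
        (∑ j : Fin n, if (j : ℕ) = k then f j ω else 0) ∂P)
        = (q + 1 : ℝ) * ∫ ω, ∑ k ∈ Finset.range n, (Apart (k + 1) ω ^ q *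
          (∑ j : Fin n, if (j : ℕ) = k then f j ω else 0)) ∂P := by
      rw [integral_finset_sum (Finset.range n)
        (f := fun k ω => Apart (k + 1) ω ^ q * (∑ j : Fin n, if (j : ℕ) = k then f j ω else 0))
        (fun k _ => hAfsel_int k), Finset.mul_sum]
    have hCS_int : Integrable (fun ω => C * S ω ^ q) P := (hSq_int q).const_mul _
    have hsum_int : Integrable (fun ω => ∑ k ∈ Finset.range n, (Apart (k + 1) ω ^ q *
        (∑ j : Fin n, if (j : ℕ) = k then f j ω else 0))) P :=
      MeasureTheory.integrable_finset_sum _ fun k _ => hAfsel_int k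
    have hlast : ∫ ω, ∑ k ∈ Finset.range n, (Apart (k + 1) ω ^ q *
        (∑ j : Fin n, if (j : ℕ) = k then f j ω else 0)) ∂P ≤ ∫ ω, C * S ω ^ q ∂P := by
      refine integral_mono_ae hsum_int hCS_int ?_
      filter_upwards [hbounds] with ω ⟨hAb, h0S, hSC⟩
      have hAS : ∀ k ∈ Finset.range n, Apart (k + 1) ω ^ q *
          (∑ j : Fin n, if (j : ℕ) = k then f j ω else 0) ≤ S ω ^ q *
          (∑ j : Fin n, if (j : ℕ) = k then f j ω else 0) := by
        intro k _
        exact mul_le_mul_of_nonneg_right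
          (pow_le_pow_left₀ (hAb (k + 1)).1 (hAb (k + 1)).2 q) (hfsel_nonneg k ω)
      calc ∑ k ∈ Finset.range n, (Apart (k + 1) ω ^ q *
            (∑ j : Fin n, if (j : ℕ) = k then f j ω else 0))
          ≤ ∑ k ∈ Finset.range n, S ω ^ q *
            (∑ j : Fin n, if (j : ℕ) = k then f j ω else 0) := Finset.sum_le_sum hAS
        _ = S ω ^ q * ∑ k ∈ Finset.range n, (∑ j : Fin n, if (j : ℕ) = k then f j ω else 0) := by
            rw [Finset.mul_sum]
        _ = S ω ^ q * ∑ j : Fin n, f j ω := by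
            congr 1
            rw [Finset.sum_comm]
            refine Finset.sum_congr rfl fun j _ => ?_
            rw [Finset.sum_ite_eq (Finset.range n) (j : ℕ) (fun _ => f j ω)]
            simp [j.isLt]
        _ ≤ S ω ^ q * C :=
            mul_le_mul_of_nonneg_left (hsum ω) (pow_nonneg h0S q)
        _ = C * S ω ^ q := mul_comm _ _
    have hC_int : ∫ ω, C * S ω ^ q ∂P = C * ∫ ω, S ω ^ q ∂P := integral_const_mul _ _
    have ih' : ∫ ω, S ω ^ q ∂P ≤ q.factorial * C ^ q := ih
    have hfinal : ∫ ω, (∑ j : Fin n, (P[f j|F (j : ℕ)]) ω) ^ (q + 1) ∂P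
        ≤ (q + 1 : ℝ) * (C * ∫ ω, S ω ^ q ∂P) := by
      rw [hstart]
      calc ∑ k ∈ Finset.range n, ∫ ω, (Apart (k + 1) ω ^ (q + 1) - Apart k ω ^ (q + 1)) ∂P
          ≤ ∑ k ∈ Finset.range n, ((q + 1 : ℝ) * ∫ ω, Apart (k + 1) ω ^ q *
            (∑ j : Fin n, if (j : ℕ) = k then f j ω else 0) ∂P) := Finset.sum_le_sum hkey
        _ = (q + 1 : ℝ) * ∫ ω, ∑ k ∈ Finset.range n, (Apart (k + 1) ω ^ q *
            (∑ j : Fin n, if (j : ℕ) = k then f j ω else 0)) ∂P := hmid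
        _ ≤ (q + 1 : ℝ) * ∫ ω, C * S ω ^ q ∂P := by
            refine mul_le_mul_of_nonneg_left hlast (by positivity)
        _ = (q + 1 : ℝ) * (C * ∫ ω, S ω ^ q ∂P) := by rw [hC_int]
    have hSq_nonneg : 0 ≤ ∫ ω, S ω ^ q ∂P := by
      refine integral_nonneg_of_ae ?_
      filter_upwards [hbounds] with ω ⟨_, h0, _⟩
      exact pow_nonneg h0 q
    calc ∫ ω, (∑ j : Fin n, (P[f j|F (j : ℕ)]) ω) ^ (q + 1) ∂P
        ≤ (q + 1 : ℝ) * (C * ∫ ω, S ω ^ q ∂P) := hfinal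
      _ ≤ (q + 1 : ℝ) * (C * (q.factorial * C ^ q)) := by
          refine mul_le_mul_of_nonneg_left (mul_le_mul_of_nonneg_left ih' hC) (by positivity)
      _ = ((q + 1).factorial : ℝ) * C ^ (q + 1) := by
          rw [Nat.factorial_succ]
          push_cast
          ring

end AuxGarsia


/-- Lemma 3.4, Eq. (3.14) of the paper. -/
theorem statement3
    {Ω : Type} [MeasurableSpace Ω] (P : Measure Ω) [IsProbabilityMeasure P]
    (N : ℕ → ℕ) (llo lhi : ℝ) (hllo : 0 < llo)
    (hratio : ∀ n : ℕ, 0 < n → llo ≤ (N n : ℝ) / (n : ℝ) ∧ (N n : ℝ) / (n : ℝ) ≤ lhi)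
    (X : (n : ℕ) → Ω → Matrix (Fin (N n)) (Fin n) ℂ)
    (ν : Measure ℂ) [IsProbabilityMeasure ν]
    (hXmeas : ∀ n i j, Measurable fun ω => X n ω i j)
    (hXdist : ∀ n i j, P.map (fun ω => X n ω i j) = ν)
    (hXindep : ∀ n, iIndepFun
      (fun (ij : Fin (N n) × Fin n) ω => X n ω ij.1 ij.2) P)
    (hmean : ∫ x, x ∂ν = 0) (hvar : ∫ x, ‖x‖ ^ 2 ∂ν = 1)
    (d : (n : ℕ) → Fin (N n) → ℝ) (dt : (n : ℕ) → Fin n → ℝ)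
    (hd : ∀ n i, 0 ≤ d n i) (hdt : ∀ n j, 0 ≤ dt n j)
    (dmax dtmax dmin dtmin amax : ℝ)
    (hdmax : ∀ n i, d n i ≤ dmax) (hdtmax : ∀ n j, dt n j ≤ dtmax)
    (hdmin : 0 < dmin) (hdtmin : 0 < dtmin)
    (hdminle : ∀ n : ℕ, 0 < n → dmin ≤ (∑ i, d n i) / (N n : ℝ))
    (hdtminle : ∀ n : ℕ, 0 < n → dtmin ≤ (∑ j, dt n j) / (n : ℝ))
    (A : (n : ℕ) → Matrix (Fin (N n)) (Fin n) ℂ)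
    (hA : ∀ n, specNorm (A n) ≤ amax)
    (p : ℕ) (hp : 1 ≤ p) :
    ∃ K : ℝ, 0 < K ∧
      ∀ n : ℕ, 0 < n → ∀ u : Fin (N n) → ℂ, ∀ z : ℂ, z ∉ nonnegReal →
        ∫ ω, (∑ j : Fin n,
            (P[fun ω' => ‖bform u (Qmat (Ymat (d n) (dt n) (X n ω') + A n) z) (fun i => A n i j)‖ ^ 2 |
                colSigma (fun ω => Ymat (d n) (dt n) (X n ω)) (j : ℕ)]) ω) ^ p ∂P ≤
          K * vecNorm u ^ (2 * p) / deltaz z ^ (2 * p) := by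
  have hamax : 0 ≤ amax := (specNorm_nonneg (A 0)).trans (hA 0)
  refine ⟨(p.factorial : ℝ) * (amax ^ 2) ^ p + 1, by positivity, ?_⟩
  intro n hn u z hz
  have hd := deltaz_pos hz
  set Yfun : Ω → Matrix (Fin (N n)) (Fin n) ℂ := fun ω => Ymat (d n) (dt n) (X n ω) with hY
  set Sfun : Ω → Matrix (Fin (N n)) (Fin n) ℂ := fun ω => Yfun ω + A n with hSfun
  -- entrywise measurability of S
  have hSmeas : ∀ i j, Measurable fun ω => Sfun ω i j := by
    intro i j
    have : (fun ω => Sfun ω i j)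
        = fun ω => ((Real.sqrt (d n i) * Real.sqrt (dt n j) / Real.sqrt (n : ℝ) : ℝ) : ℂ) *
            X n ω i j + A n i j := by
      funext ω
      simp [hSfun, hY, Ymat, Matrix.add_apply]
    rw [this]
    exact (((hXmeas n i j).const_mul _).add_const _)
  -- the filtration
  set F : ℕ → MeasurableSpace Ω := fun k => colSigma Yfun k with hFdef
  have hF : ∀ k, F k ≤ (inferInstance : MeasurableSpace Ω) := by
    intro k
    refine iSup_le fun ℓ => iSup_le fun _ => ?_
    rw [← measurable_iff_comap_le]
    refine measurable_pi_lambda _ fun i => ?_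
    have : (fun ω => Yfun ω i ℓ)
        = fun ω => ((Real.sqrt (d n i) * Real.sqrt (dt n ℓ) / Real.sqrt (n : ℝ) : ℝ) : ℂ) *
            X n ω i ℓ := by
      funext ω
      simp [hY, Ymat]
    rw [this]
    exact (hXmeas n i ℓ).const_mul _
  have hmono : Monotone F := by
    intro a b hab
    refine iSup_le fun ℓ => iSup_le fun h => ?_
    exact le_iSup₂_of_le ℓ (lt_of_lt_of_le h hab) le_rfl
  -- the summands
  set f : Fin n → Ω → ℝ := fun j ω' =>
    ‖bform u (Qmat (Ymat (d n) (dt n) (X n ω') + A n) z) (fun i => A n i j)‖ ^ 2 with hfdef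
  have hfm : ∀ j, Measurable (f j) := fun j => measurable_bform hSmeas u _ z
  have hf0 : ∀ j ω, 0 ≤ f j ω := fun j ω => by positivity
  set C : ℝ := specNorm (A n) ^ 2 * vecNorm u ^ 2 / deltaz z ^ 2 with hCdef
  have hC : 0 ≤ C := by
    have := specNorm_nonneg (A n)
    have := vecNorm_nonneg u
    positivity
  have hsum : ∀ ω, ∑ j, f j ω ≤ C := fun ω => sum_bform_sq_le (Sfun ω) (A n) u hz
  have hg := garsia P F hF hmono f hfm hf0 hC hsum p
  refine le_trans hg ?_
  -- numeric conclusion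
  have hvu := vecNorm_nonneg u
  have hCle : C ≤ amax ^ 2 * vecNorm u ^ 2 / deltaz z ^ 2 := by
    have h1 : specNorm (A n) ^ 2 ≤ amax ^ 2 := by
      nlinarith [specNorm_nonneg (A n), hA n]
    rw [hCdef]
    gcongr
  have hCp : C ^ p ≤ (amax ^ 2 * vecNorm u ^ 2 / deltaz z ^ 2) ^ p :=
    pow_le_pow_left₀ hC hCle p
  have heq : (amax ^ 2 * vecNorm u ^ 2 / deltaz z ^ 2) ^ p
      = (amax ^ 2) ^ p * (vecNorm u ^ (2 * p) / deltaz z ^ (2 * p)) := by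
    rw [div_pow, mul_pow, pow_mul, pow_mul]
    ring
  have hX0 : 0 ≤ vecNorm u ^ (2 * p) / deltaz z ^ (2 * p) := by positivity
  calc (p.factorial : ℝ) * C ^ p
      ≤ (p.factorial : ℝ) * ((amax ^ 2) ^ p * (vecNorm u ^ (2 * p) / deltaz z ^ (2 * p))) := by
        refine mul_le_mul_of_nonneg_left (hCp.trans_eq heq) (by positivity)
    _ = ((p.factorial : ℝ) * (amax ^ 2) ^ p) * (vecNorm u ^ (2 * p) / deltaz z ^ (2 * p)) := by
        ring
    _ ≤ ((p.factorial : ℝ) * (amax ^ 2) ^ p + 1) * (vecNorm u ^ (2 * p) / deltaz z ^ (2 * p)) := by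
        refine mul_le_mul_of_nonneg_right (by linarith) hX0
    _ = ((p.factorial : ℝ) * (amax ^ 2) ^ p + 1) * vecNorm u ^ (2 * p) / deltaz z ^ (2 * p) := by
        ring
end
end

section
/- Let x_1, x_2, y_1, y_2, s_1, s_2, t_1, t_2 be nonnegative real numbers with x_i ≤ 1, y_i ≤ 1 and (1 − x_i)(1 − y_i) − s_i t_i ≥ 0 for i = 1, 2. Then (1 − √(x_1 x_2))(1 − √(y_1 y_2)) − √(s_1 s_2 t_1 t_2) ≥ √((1 − x_1)(1 − y_1) − s_1 t_1) · √((1 − x_2)(1 − y_2) − s_2 t_2). -/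
/-- Cauchy–Schwarz for square roots: √p√q + √r√s ≤ √((p+r)(q+s)). -/
lemma aux_cs (p q r s : ℝ) (hp : 0 ≤ p) (hq : 0 ≤ q) (hr : 0 ≤ r) (hs : 0 ≤ s) :
    Real.sqrt p * Real.sqrt q + Real.sqrt r * Real.sqrt s ≤
      Real.sqrt ((p + r) * (q + s)) := by
  have hsp := Real.sqrt_nonneg p
  have hsq := Real.sqrt_nonneg q
  have hsr := Real.sqrt_nonneg r
  have hss := Real.sqrt_nonneg s
  rw [show Real.sqrt p * Real.sqrt q + Real.sqrt r * Real.sqrt s =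
    Real.sqrt ((Real.sqrt p * Real.sqrt q + Real.sqrt r * Real.sqrt s) ^ 2) from
    (Real.sqrt_sq (by positivity)).symm]
  apply Real.sqrt_le_sqrt
  have hp2 : Real.sqrt p ^ 2 = p := Real.sq_sqrt hp
  have hq2 : Real.sqrt q ^ 2 = q := Real.sq_sqrt hq
  have hr2 : Real.sqrt r ^ 2 = r := Real.sq_sqrt hr
  have hs2 : Real.sqrt s ^ 2 = s := Real.sq_sqrt hs
  nlinarith [sq_nonneg (Real.sqrt p * Real.sqrt s - Real.sqrt q * Real.sqrt r)]

/-- AM–GM step: √((1-a)(1-b)) ≤ 1 - √(ab) for a, b ∈ [0,1]. -/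
lemma aux_amgm (a b : ℝ) (ha : 0 ≤ a) (hb : 0 ≤ b) (ha1 : a ≤ 1) (hb1 : b ≤ 1) :
    Real.sqrt ((1 - a) * (1 - b)) ≤ 1 - Real.sqrt (a * b) := by
  have hab : Real.sqrt (a * b) = Real.sqrt a * Real.sqrt b := Real.sqrt_mul ha b
  have ha2 : Real.sqrt a ^ 2 = a := Real.sq_sqrt ha
  have hb2 : Real.sqrt b ^ 2 = b := Real.sq_sqrt hb
  have ha1' : Real.sqrt a ≤ 1 := by
    rw [show (1:ℝ) = Real.sqrt 1 by simp]; exact Real.sqrt_le_sqrt ha1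
  have hb1' : Real.sqrt b ≤ 1 := by
    rw [show (1:ℝ) = Real.sqrt 1 by simp]; exact Real.sqrt_le_sqrt hb1
  have key : (1 - a) * (1 - b) ≤ (1 - Real.sqrt (a * b)) ^ 2 := by
    rw [hab]; nlinarith [sq_nonneg (Real.sqrt a - Real.sqrt b)]
  calc Real.sqrt ((1 - a) * (1 - b)) ≤ Real.sqrt ((1 - Real.sqrt (a * b)) ^ 2) :=
        Real.sqrt_le_sqrt key
    _ = 1 - Real.sqrt (a * b) := by
        rw [Real.sqrt_sq (by rw [hab]; nlinarith)]

/-- Proposition 6.2 of the paper. -/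
theorem statement12 (x1 x2 y1 y2 s1 s2 t1 t2 : ℝ)
    (hx1 : 0 ≤ x1) (hx2 : 0 ≤ x2) (hy1 : 0 ≤ y1) (hy2 : 0 ≤ y2)
    (hs1 : 0 ≤ s1) (hs2 : 0 ≤ s2) (ht1 : 0 ≤ t1) (ht2 : 0 ≤ t2)
    (hx1le : x1 ≤ 1) (hx2le : x2 ≤ 1) (hy1le : y1 ≤ 1) (hy2le : y2 ≤ 1)
    (h1 : 0 ≤ (1 - x1) * (1 - y1) - s1 * t1)
    (h2 : 0 ≤ (1 - x2) * (1 - y2) - s2 * t2) :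
    Real.sqrt ((1 - x1) * (1 - y1) - s1 * t1) *
        Real.sqrt ((1 - x2) * (1 - y2) - s2 * t2) ≤
      (1 - Real.sqrt (x1 * x2)) * (1 - Real.sqrt (y1 * y2)) -
        Real.sqrt (s1 * s2 * t1 * t2) := by
  have hst : Real.sqrt (s1 * s2 * t1 * t2) = Real.sqrt (s1 * t1) * Real.sqrt (s2 * t2) := by
    rw [show s1 * s2 * t1 * t2 = (s1 * t1) * (s2 * t2) by ring,
      Real.sqrt_mul (mul_nonneg hs1 ht1)]
  have cs := aux_cs ((1 - x1) * (1 - y1) - s1 * t1) ((1 - x2) * (1 - y2) - s2 * t2)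
    (s1 * t1) (s2 * t2) h1 h2 (mul_nonneg hs1 ht1) (mul_nonneg hs2 ht2)
  have heq : ((1 - x1) * (1 - y1) - s1 * t1 + s1 * t1) *
      ((1 - x2) * (1 - y2) - s2 * t2 + s2 * t2) =
      ((1 - x1) * (1 - x2)) * ((1 - y1) * (1 - y2)) := by ring
  rw [heq] at cs
  have hsplit : Real.sqrt (((1 - x1) * (1 - x2)) * ((1 - y1) * (1 - y2))) =
      Real.sqrt ((1 - x1) * (1 - x2)) * Real.sqrt ((1 - y1) * (1 - y2)) :=
    Real.sqrt_mul (mul_nonneg (by linarith) (by linarith)) _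
  rw [hsplit] at cs
  have hx := aux_amgm x1 x2 hx1 hx2 hx1le hx2le
  have hy := aux_amgm y1 y2 hy1 hy2 hy1le hy2le
  have hmul : Real.sqrt ((1 - x1) * (1 - x2)) * Real.sqrt ((1 - y1) * (1 - y2)) ≤
      (1 - Real.sqrt (x1 * x2)) * (1 - Real.sqrt (y1 * y2)) :=
    mul_le_mul hx hy (Real.sqrt_nonneg _) (by linarith [Real.sqrt_nonneg ((1 - x1) * (1 - x2))])
  rw [hst]
  linarith
end
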